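/- arXiv:1802.08799 — 2 statements merged into one kernel-verified Lean document; each statement's English description precedes it below -/
import Mathlib

section
/- Let G be a simple graph on a finite vertex set of size m such that for every subset V' of vertices, the subgraph induced on V' has at most c·|V'| edges, where c > 0 is a real constant. Then for every integer k ≥ 2, the number of k-element vertex subsets of G that span a complete graph K_k is at most ((2c)^(k−1)/k!)·m. -/
/-!
Double count the pairs `(v, K)` with `K` an `(n+1)`-clique inside `s` and `v ∈ K`: deleting
`v` from `K` leaves an `n`-clique inside `s ∩ N(v)`, so
`(n+1) · #K_{n+1}(s) = ∑_{v ∈ s} #K_n(s ∩ N(v))`. By induction on `n` the right side is at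
most `(2c)^(n-1)/n! · ∑_{v ∈ s} #(s ∩ N(v))`, and this degree sum of `G[s]` is twice its
number of edges, hence at most `2c · #s`.
-/

open Finset

namespace SimpleGraph

variable {V : Type*} [Fintype V] [DecidableEq V] (G : SimpleGraph V) [DecidableRel G.Adj]

-- The `n`-cliques and the edges of the induced subgraph `G[s]`, kept as subsets of `V`.
def cliqueFinsetOn (n : ℕ) (s : Finset V) : Finset (Finset V) :=
  {t ∈ G.cliqueFinset n | t ⊆ s}

def edgeFinsetOn (s : Finset V) : Finset (Sym2 V) := {e ∈ G.edgeFinset | ∀ v ∈ e, v ∈ s}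

variable {G}

@[simp]
lemma mem_cliqueFinsetOn {n : ℕ} {s t : Finset V} :
    t ∈ G.cliqueFinsetOn n s ↔ G.IsNClique n t ∧ t ⊆ s := by
  rw [cliqueFinsetOn, mem_filter, mem_cliqueFinset_iff]

variable (G)

lemma cliqueFinsetOn_univ (n : ℕ) : G.cliqueFinsetOn n univ = G.cliqueFinset n :=
  filter_true_of_mem fun t _ => subset_univ t

lemma cliqueFinsetOn_zero (s : Finset V) : G.cliqueFinsetOn 0 s = {∅} := by
  ext t
  simp +contextual [isNClique_zero]

lemma card_filter_mem_cliqueFinsetOn_succ {n : ℕ} {s : Finset V} {v : V} (hv : v ∈ s) :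
    #{t ∈ G.cliqueFinsetOn (n + 1) s | v ∈ t} =
      #(G.cliqueFinsetOn n (s ∩ G.neighborFinset v)) := by
  refine card_nbij' (·.erase v) (insert v) ?_ ?_ ?_ ?_
  · intro t ht
    simp only [mem_coe, mem_filter, mem_cliqueFinsetOn] at ht ⊢
    obtain ⟨⟨hclique, hts⟩, hvt⟩ := ht
    refine ⟨hclique.erase_of_mem hvt, fun u hu => ?_⟩
    obtain ⟨huv, hut⟩ := mem_erase.mp hu
    exact mem_inter.mpr
      ⟨hts hut, (mem_neighborFinset _ _ _).mpr (hclique.1 hvt hut (Ne.symm huv))⟩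
  · intro t ht
    simp only [mem_coe, mem_filter, mem_cliqueFinsetOn, subset_inter_iff] at ht ⊢
    obtain ⟨hclique, hts, htN⟩ := ht
    exact ⟨⟨hclique.insert fun u hu => (mem_neighborFinset _ _ _).mp (htN hu),
      insert_subset hv hts⟩, mem_insert_self v t⟩
  · intro t ht
    exact insert_erase (mem_filter.mp ht).2
  · intro t ht
    refine erase_insert fun hvt => G.irrefl (v := v) ?_
    exact (mem_neighborFinset _ _ _).mp (mem_inter.mp ((mem_cliqueFinsetOn.mp ht).2 hvt)).2

lemma card_cliqueFinsetOn_succ_mul (n : ℕ) (s : Finset V) :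
    #(G.cliqueFinsetOn (n + 1) s) * (n + 1) =
      ∑ v ∈ s, #(G.cliqueFinsetOn n (s ∩ G.neighborFinset v)) := by
  calc #(G.cliqueFinsetOn (n + 1) s) * (n + 1)
      = ∑ t ∈ G.cliqueFinsetOn (n + 1) s, #(s.bipartiteBelow (· ∈ ·) t) := by
        rw [← smul_eq_mul, ← sum_const]
        refine sum_congr rfl fun t ht => ?_
        obtain ⟨hclique, hts⟩ := mem_cliqueFinsetOn.mp ht
        rw [bipartiteBelow, filter_mem_eq_inter, inter_eq_right.mpr hts, hclique.card_eq]
    _ = ∑ v ∈ s, #((G.cliqueFinsetOn (n + 1) s).bipartiteAbove (· ∈ ·) v) :=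
        (sum_card_bipartiteAbove_eq_sum_card_bipartiteBelow _).symm
    _ = ∑ v ∈ s, #(G.cliqueFinsetOn n (s ∩ G.neighborFinset v)) :=
        sum_congr rfl fun v hv => G.card_filter_mem_cliqueFinsetOn_succ hv

lemma sum_card_inter_neighborFinset (s : Finset V) :
    ∑ v ∈ s, #(s ∩ G.neighborFinset v) = 2 * #(G.edgeFinsetOn s) := by
  classical
  set H := ((⊤ : G.Subgraph).induce s).spanningCoe
  have hedges : H.edgeFinset = G.edgeFinsetOn s := by
    ext e
    induction e with
    | _ x y =>
      simp only [H, edgeFinsetOn, mem_edgeFinset, mem_edgeSet, mem_filter, Sym2.forall_mem_pair,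
        Subgraph.spanningCoe_adj, Subgraph.induce_adj, Subgraph.top_adj, mem_coe]
      tauto
  have hdeg (v : V) : H.degree v = if v ∈ s then #(s ∩ G.neighborFinset v) else 0 := by
    rw [← card_neighborFinset_eq_degree]
    split_ifs with hv
    · congr 1; ext u; simp [H, hv]
    · exact card_eq_zero.mpr (by ext u; simp [H, hv])
  rw [← hedges, ← sum_degrees_eq_twice_card_edges, sum_congr rfl fun v _ => hdeg v, sum_ite_mem,
    univ_inter]

theorem card_cliqueFinsetOn_le {c : ℝ} (hc : 0 ≤ c)
    (hsparse : ∀ s : Finset V, (#(G.edgeFinsetOn s) : ℝ) ≤ c * #s) (n : ℕ) (s : Finset V) :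
    (#(G.cliqueFinsetOn (n + 1) s) : ℝ) ≤ (2 * c) ^ n / (n + 1).factorial * #s := by
  induction n generalizing s with
  | zero =>
    have h := G.card_cliqueFinsetOn_succ_mul 0 s
    simp only [cliqueFinsetOn_zero, card_singleton, sum_const, smul_eq_mul, zero_add, mul_one] at h
    simp [h]
  | succ n ih =>
    have hcount : (#(G.cliqueFinsetOn (n + 2) s) : ℝ) * (n + 2) =
        ∑ v ∈ s, (#(G.cliqueFinsetOn (n + 1) (s ∩ G.neighborFinset v)) : ℝ) := by
      exact_mod_cast G.card_cliqueFinsetOn_succ_mul (n + 1) s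
    have hdegrees : ∑ v ∈ s, (#(s ∩ G.neighborFinset v) : ℝ) = 2 * #(G.edgeFinsetOn s) := by
      exact_mod_cast G.sum_card_inter_neighborFinset s
    refine le_of_mul_le_mul_right ?_ (by positivity : (0 : ℝ) < n + 2)
    calc (#(G.cliqueFinsetOn (n + 2) s) : ℝ) * (n + 2)
        ≤ ∑ v ∈ s, (2 * c) ^ n / (n + 1).factorial * #(s ∩ G.neighborFinset v) :=
          hcount.trans_le (sum_le_sum fun v _ => ih _)
      _ ≤ (2 * c) ^ n / (n + 1).factorial * (2 * (c * #s)) := by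
          rw [← mul_sum, hdegrees]
          gcongr
          exact hsparse s
      _ = (2 * c) ^ (n + 1) / (n + 1 + 1).factorial * #s * (n + 2) := by
          rw [Nat.factorial_succ (n + 1), pow_succ]
          push_cast
          field_simp
          ring

end SimpleGraph

/-- If every induced subgraph of `G` on a vertex subset `V'` has at most `c·|V'|` edges,
then the number of `k`-cliques of `G` is at most `((2c)^(k-1)/k!)·m`. -/
theorem stmt_1 {V : Type*} [Fintype V] [DecidableEq V]
    (G : SimpleGraph V) [DecidableRel G.Adj]
    (m : ℕ) (hm : Fintype.card V = m) (c : ℝ) (hc : 0 < c)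
    (hsparse : ∀ V' : Finset V,
      ((G.edgeFinset.filter fun e => ∀ v ∈ e, v ∈ V').card : ℝ) ≤ c * V'.card)
    (k : ℕ) (hk : 2 ≤ k) :
    ((G.cliqueFinset k).card : ℝ) ≤ (2 * c) ^ (k - 1) / (Nat.factorial k) * m := by
  obtain ⟨n, rfl⟩ : ∃ n, k = n + 1 := ⟨k - 1, by omega⟩
  have h := SimpleGraph.card_cliqueFinsetOn_le G hc.le hsparse n univ
  rw [Nat.add_sub_cancel]
  rwa [SimpleGraph.cliqueFinsetOn_univ, card_univ, hm] at h
end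

section
/- Let S be a finite family of finite sets that has VC-dimension at most d. Then there exists an injective map assigning to each set S in the family a subset S* ⊆ S with |S*| ≤ d. -/
/-- A finite family of finite sets with VC-dimension at most `d` admits an injective
signature assignment: each member `s` gets a subset `s* ⊆ s` of size at most `d`,
with distinct members getting distinct signatures. -/
theorem stmt_3 {α : Type*} [DecidableEq α] (S : Finset (Finset α)) (d : ℕ)
    (hVC : ∀ K : Finset α, (∀ Z ⊆ K, ∃ s ∈ S, Z = K ∩ s) → K.card ≤ d) :
    ∃ f : Finset α → Finset α,
      Set.InjOn f ↑S ∧ ∀ s ∈ S, f s ⊆ s ∧ (f s).card ≤ d := by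
  classical
  set t : {s // s ∈ S} → Finset (Finset α) :=
    fun s => (s : Finset α).powerset.filter (fun z => z.card ≤ d) with ht
  have hall : ∀ A : Finset {s // s ∈ S}, A.card ≤ (A.biUnion t).card := by
    intro A
    set B : Finset (Finset α) := A.image Subtype.val with hB
    have hcard : A.card = B.card := by
      rw [hB, Finset.card_image_of_injective _ Subtype.val_injective]
    have hsub : B.shatterer ⊆ A.biUnion t := by
      intro Z hZ
      rw [Finset.mem_shatterer] at hZ
      have hZd : Z.card ≤ d := by
        apply hVC
        intro W hW
        obtain ⟨u, hu, huW⟩ := hZ hW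
        rw [hB, Finset.mem_image] at hu
        obtain ⟨s, hs, rfl⟩ := hu
        exact ⟨s, s.2, huW.symm⟩
      obtain ⟨u, hu, huZ⟩ := hZ (Finset.Subset.refl Z)
      rw [hB, Finset.mem_image] at hu
      obtain ⟨s, hs, rfl⟩ := hu
      refine Finset.mem_biUnion.2 ⟨s, hs, ?_⟩
      rw [ht, Finset.mem_filter, Finset.mem_powerset]
      exact ⟨by rw [← huZ]; exact Finset.inter_subset_right, hZd⟩
    calc A.card = B.card := hcard
      _ ≤ B.shatterer.card := Finset.card_le_card_shatterer B
      _ ≤ (A.biUnion t).card := Finset.card_le_card hsub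
  obtain ⟨g, hginj, hgmem⟩ :=
    (Finset.all_card_le_biUnion_card_iff_exists_injective t).1 hall
  refine ⟨fun s => if h : s ∈ S then g ⟨s, h⟩ else ∅, ?_, ?_⟩
  · intro a ha b hb hab
    simp only [Finset.mem_coe] at ha hb
    simp only [dif_pos ha, dif_pos hb] at hab
    exact Subtype.mk_eq_mk.1 (hginj hab)
  · intro s hs
    have := hgmem ⟨s, hs⟩
    rw [ht, Finset.mem_filter, Finset.mem_powerset] at this
    simp only [dif_pos hs]
    exact this
end
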